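/- Combining both directions: for a tree 𝒯 with geometric decay parameter 0 < ρ < 1, 0 < τ ≤ 1, 1/τ = α + 1/p, and f : Ω₀ → ℝ^{L−1} with f = Σ_{Ω∈𝒯} ψ_Ω, the equivalence |f|_{B̃_τ^{α,1}(𝒯)} ∼ N_τ(f,𝒯) holds with constants of equivalence depending only on α, τ, ρ and not on the dimension n of the domain. -/

import Mathlib

/-!
On a cell `Ω` of level `l`, `f - E⃗_Ω` is the sum of the wavelets of the strict descendants of `Ω`,
so for `τ ≤ 1` the `τ`-subadditivity of the norm bounds `∫_Ω ‖f - E⃗_Ω‖^τ` by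
`Σ_{Ω' ⊊ Ω} ‖ψ_{Ω'}‖^τ |Ω'|`. Exchanging the two sums, each wavelet `ψ_{Ω'}` collects the weights
`|Ω|^{-ατ}` of its ancestors; since a `k`-th ancestor has `|Ω'| ≤ ρ^k |Ω|`, these form a geometric
series bounded by `ρ^{ατ} / (1 - ρ^{ατ}) · |Ω'|^{-ατ}`, and `1 - ατ = τ/p` gives the sparsity.

Conversely `‖E⃗_{Ω'} - E⃗_Ω‖^τ |Ω'| ≤ ∫_{Ω'} ‖f - E⃗_{Ω'}‖^τ + ∫_Ω ‖f - E⃗_Ω‖^τ`, and because the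
sibling of `Ω'` has measure at most `ρ |Ω|`, `|Ω'| ≥ (1 - ρ) |Ω|`: each node absorbs the weight of
its parent at the cost of `(1 - ρ)^{-ατ}`, and every parent is counted by two children.
-/

open MeasureTheory
open scoped ENNReal

/-- The mean `E⃗_Ω` of `f` over `Ω`. -/
noncomputable def cellMean {n d : ℕ} (f : (Fin n → ℝ) → EuclideanSpace ℝ (Fin d))
    (Ω : Set (Fin n → ℝ)) : EuclideanSpace ℝ (Fin d) := ⨍ x in Ω, f x

/-- The `τ`-th power of the averaged-modulus Besov semi-norm
`|f|_{B̃_τ^{α,1}(𝒯)} = (Σ_{Ω∈𝒯} (|Ω|^{-α} w₁(f,Ω)_τ)^τ)^{1/τ}`, where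
`w₁(f,Ω)_τ^τ = ∫_Ω ‖f - E⃗_Ω‖_{ℓ₂}^τ`; node `(l,j)` is the `j`-th cell at level `l`. -/
noncomputable def besovTildeTau {n d : ℕ} (α τ : ℝ)
    (f : (Fin n → ℝ) → EuclideanSpace ℝ (Fin d))
    (cells : ℕ → ℕ → Set (Fin n → ℝ)) : ℝ≥0∞ :=
  ∑' (l : ℕ) (j : ℕ), volume (cells l j) ^ (-(α * τ)) *
    ∫⁻ x in cells l j, (‖f x - cellMean f (cells l j)‖₊ : ℝ≥0∞) ^ τ

/-- The `τ`-th power of the tree sparsity `N_τ(f,𝒯) = (Σ_{Ω'≠Ω₀} ‖ψ_{Ω'}‖_p^τ)^{1/τ}`, where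
`‖ψ_{Ω'}‖_p^τ = ‖E⃗_{Ω'} - E⃗_Ω‖_{ℓ₂}^τ |Ω'|^{τ/p}` (`Ω` the parent of `Ω'`); the cells at
level `l+1` with index `j` have parent `(l, j/2)`. -/
noncomputable def sparsityTau {n d : ℕ} (τ p : ℝ)
    (f : (Fin n → ℝ) → EuclideanSpace ℝ (Fin d))
    (cells : ℕ → ℕ → Set (Fin n → ℝ)) : ℝ≥0∞ :=
  ∑' (l : ℕ) (j : ℕ),
    (‖cellMean f (cells (l + 1) j) - cellMean f (cells l (j / 2))‖₊ : ℝ≥0∞) ^ τ *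
      volume (cells (l + 1) j) ^ (τ / p)

/-- The piecewise-constant wavelet of the node `(l, j)`:
`ψ_{Ω₀} = 1_{Ω₀} E⃗_{Ω₀}` at the root, and `ψ_{Ω'} = 1_{Ω'}(E⃗_{Ω'} - E⃗_Ω)` for a child `Ω'`
of `Ω`. -/
noncomputable def treeWavelet {n d : ℕ} (f : (Fin n → ℝ) → EuclideanSpace ℝ (Fin d))
    (cells : ℕ → ℕ → Set (Fin n → ℝ)) :
    ℕ → ℕ → (Fin n → ℝ) → EuclideanSpace ℝ (Fin d)
  | 0, j => (cells 0 j).indicator fun _ => cellMean f (cells 0 j)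
  | (l + 1), j => (cells (l + 1) j).indicator
      fun _ => cellMean f (cells (l + 1) j) - cellMean f (cells l (j / 2))

namespace ENNReal

theorem rpow_sum_le_sum_rpow {ι : Type*} {τ : ℝ} (hτ0 : 0 < τ) (hτ1 : τ ≤ 1)
    (s : Finset ι) (a : ι → ℝ≥0∞) : (∑ i ∈ s, a i) ^ τ ≤ ∑ i ∈ s, a i ^ τ := by
  classical
  induction s using Finset.induction_on with
  | empty => simp [zero_rpow_of_pos hτ0]
  | insert i s hi ih =>
    rw [Finset.sum_insert hi, Finset.sum_insert hi]
    exact (rpow_add_le_add_rpow _ _ hτ0.le hτ1).trans (by gcongr)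

theorem rpow_tsum_le_tsum_rpow {ι : Type*} {τ : ℝ} (hτ0 : 0 < τ) (hτ1 : τ ≤ 1)
    (a : ι → ℝ≥0∞) : (∑' i, a i) ^ τ ≤ ∑' i, a i ^ τ := by
  have h := (orderIsoRpow τ hτ0).map_iSup fun s : Finset ι => ∑ i ∈ s, a i
  simp only [orderIsoRpow_apply] at h
  rw [ENNReal.tsum_eq_iSup_sum, h]
  exact iSup_le fun s => (rpow_sum_le_sum_rpow hτ0 hτ1 s a).trans (ENNReal.sum_le_tsum s)

theorem inv_le_mul_inv_of_le_mul {a b c : ℝ≥0∞} (hc0 : c ≠ 0) (hc : c ≠ ∞) (h : a ≤ c * b) :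
    b⁻¹ ≤ c * a⁻¹ := by
  rw [← div_eq_mul_inv, ← ENNReal.inv_div (Or.inl hc) (Or.inl hc0), ENNReal.inv_le_inv,
    ENNReal.div_le_iff_le_mul (Or.inl hc0) (Or.inl hc), mul_comm]
  exact h

theorem rpow_neg_le_rpow_mul_rpow_neg {a b c : ℝ≥0∞} (hc0 : c ≠ 0) (hc : c ≠ ∞) {s : ℝ}
    (hs : 0 ≤ s) (h : a ≤ c * b) : b ^ (-s) ≤ c ^ s * a ^ (-s) := by
  rw [rpow_neg, rpow_neg]
  refine inv_le_mul_inv_of_le_mul (rpow_pos (pos_iff_ne_zero.2 hc0) hc).ne'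
    (rpow_ne_top_of_nonneg hs hc) ?_
  rw [← mul_rpow_of_nonneg _ _ hs]
  exact rpow_le_rpow h hs

theorem rpow_neg_mul_self {a : ℝ≥0∞} (ha : a ≠ ∞) {s : ℝ} (hs : s < 1) :
    a ^ (-s) * a = a ^ (1 - s) := by
  rcases eq_or_ne a 0 with rfl | ha0
  · simp [zero_rpow_of_pos (sub_pos.2 hs)]
  · rw [sub_eq_neg_add, rpow_add _ _ ha0 ha, rpow_one]

theorem tsum_comp_div_two (g : ℕ → ℝ≥0∞) : ∑' j, g (j / 2) = 2 * ∑' j, g j := by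
  rw [← tsum_even_add_odd ENNReal.summable ENNReal.summable, two_mul]
  congr 1 <;> exact tsum_congr fun k => by congr 1; omega

theorem tsum_mul_tsum_mul_comm {ι κ : Type*} (u : ι → ℝ≥0∞) (v : κ → ℝ≥0∞)
    (w : ι → κ → ℝ≥0∞) : ∑' i, u i * ∑' k, v k * w i k = ∑' k, v k * ∑' i, u i * w i k := by
  simp_rw [← ENNReal.tsum_mul_left]
  rw [ENNReal.tsum_comm]
  exact tsum_congr fun k => tsum_congr fun i => mul_left_comm _ _ _

theorem rpow_le_ofReal_rpow_mul_rpow {x y : ℝ≥0∞} {K t : ℝ} (hK : 0 ≤ K) (ht : 0 ≤ t)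
    (h : x ≤ ENNReal.ofReal K * y) : x ^ t ≤ ENNReal.ofReal (K ^ t) * y ^ t := by
  calc x ^ t ≤ (ENNReal.ofReal K * y) ^ t := rpow_le_rpow h ht
    _ = ENNReal.ofReal (K ^ t) * y ^ t := by
      rw [mul_rpow_of_nonneg _ _ ht, ofReal_rpow_of_nonneg hK ht]

end ENNReal

theorem sum_range_pow_sub_le {x : ℝ} (hx0 : 0 ≤ x) (hx1 : x < 1) (m : ℕ) :
    ∑ l ∈ Finset.range m, x ^ (m - l) ≤ x / (1 - x) := by
  calc ∑ l ∈ Finset.range m, x ^ (m - l) = ∑ i ∈ Finset.Ico 1 (m + 1), x ^ i := by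
        rw [Finset.sum_Ico_eq_sum_range, ← Finset.sum_range_reflect]
        refine Finset.sum_congr rfl fun l hl => ?_
        rw [Finset.mem_range] at hl
        congr 1
        omega
    _ ≤ x / (1 - x) := by simpa using geom_sum_Ico_le_of_lt_one (m := 1) (n := m + 1) hx0 hx1

theorem measure_le_pow_mul_ancestor {α : Type*} [MeasurableSpace α] {μ : Measure α}
    {cells : ℕ → ℕ → Set α} {c : ℝ≥0∞}
    (hdecay : ∀ l j, μ (cells (l + 1) j) ≤ c * μ (cells l (j / 2))) (i l j : ℕ) :
    μ (cells (l + i) j) ≤ c ^ i * μ (cells l (j / 2 ^ i)) := by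
  induction i generalizing j with
  | zero => simp
  | succ i ih =>
    calc μ (cells (l + i + 1) j) ≤ c * μ (cells (l + i) (j / 2)) := hdecay (l + i) j
      _ ≤ c * (c ^ i * μ (cells l (j / 2 / 2 ^ i))) := by gcongr; exact ih _
      _ = c ^ (i + 1) * μ (cells l (j / 2 ^ (i + 1))) := by
        rw [Nat.div_div_eq_div_mul, ← pow_succ', ← mul_assoc, ← pow_succ']

structure IsBinaryPartitionTree {α : Type*} (cells : ℕ → ℕ → Set α) : Prop where
  root_eq_empty : ∀ j, j ≠ 0 → cells 0 j = ∅
  union_children : ∀ l j, cells (l + 1) (2 * j) ∪ cells (l + 1) (2 * j + 1) = cells l j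
  disjoint_children : ∀ l j, Disjoint (cells (l + 1) (2 * j)) (cells (l + 1) (2 * j + 1))

namespace IsBinaryPartitionTree

variable {α : Type*} {cells : ℕ → ℕ → Set α}

theorem subset_parent (hT : IsBinaryPartitionTree cells) (l j : ℕ) :
    cells (l + 1) j ⊆ cells l (j / 2) := by
  obtain ⟨m, rfl | rfl⟩ := Nat.even_or_odd' j
  · rw [show 2 * m / 2 = m by omega, ← hT.union_children l m]; exact Set.subset_union_left
  · rw [show (2 * m + 1) / 2 = m by omega, ← hT.union_children l m]; exact Set.subset_union_right

theorem subset_ancestor (hT : IsBinaryPartitionTree cells) (i l j : ℕ) :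
    cells (l + i) j ⊆ cells l (j / 2 ^ i) := by
  induction i generalizing j with
  | zero => simp
  | succ i ih =>
    rw [← add_assoc, pow_succ', ← Nat.div_div_eq_div_mul]
    exact (hT.subset_parent (l + i) j).trans (ih (j / 2))

theorem subset_root (hT : IsBinaryPartitionTree cells) (l j : ℕ) : cells l j ⊆ cells 0 0 := by
  have h := hT.subset_ancestor l 0 j
  rw [zero_add] at h
  rcases eq_or_ne (j / 2 ^ l) 0 with h0 | h0
  · rwa [h0] at h
  · rw [hT.root_eq_empty _ h0] at h
    exact h.trans (Set.empty_subset _)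

theorem disjoint_of_ne (hT : IsBinaryPartitionTree cells) (l : ℕ) {j k : ℕ} (hjk : j ≠ k) :
    Disjoint (cells l j) (cells l k) := by
  induction l generalizing j k with
  | zero =>
    rcases eq_or_ne j 0 with rfl | hj
    · rw [hT.root_eq_empty k hjk.symm]; exact Set.disjoint_empty _
    · rw [hT.root_eq_empty j hj]; exact Set.empty_disjoint _
  | succ l ih =>
    by_cases h : j / 2 = k / 2
    · obtain ⟨m, rfl | rfl⟩ := Nat.even_or_odd' j <;>
        obtain ⟨m', rfl | rfl⟩ := Nat.even_or_odd' k <;>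
        obtain rfl : m = m' := by omega
      · exact absurd rfl hjk
      · exact hT.disjoint_children l m
      · exact (hT.disjoint_children l m).symm
      · exact absurd rfl hjk
    · exact (ih h).mono (hT.subset_parent l j) (hT.subset_parent l k)

variable [MeasurableSpace α] {μ : Measure α}

theorem measure_eq_add_children (hT : IsBinaryPartitionTree cells)
    (hmeas : ∀ l j, MeasurableSet (cells l j)) (l j : ℕ) :
    μ (cells l j) = μ (cells (l + 1) (2 * j)) + μ (cells (l + 1) (2 * j + 1)) := by
  rw [← measure_union (hT.disjoint_children l j) (hmeas _ _), hT.union_children]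

theorem measure_parent_le_add (hT : IsBinaryPartitionTree cells)
    (hmeas : ∀ l j, MeasurableSet (cells l j)) {c : ℝ≥0∞}
    (hdecay : ∀ l j, μ (cells (l + 1) j) ≤ c * μ (cells l (j / 2))) (l j : ℕ) :
    μ (cells l (j / 2)) ≤ μ (cells (l + 1) j) + c * μ (cells l (j / 2)) := by
  obtain ⟨m, rfl | rfl⟩ := Nat.even_or_odd' j
  · have h := hdecay l (2 * m + 1)
    rw [show (2 * m + 1) / 2 = m by omega] at h
    rw [show 2 * m / 2 = m by omega]
    calc μ (cells l m) = μ (cells (l + 1) (2 * m)) + μ (cells (l + 1) (2 * m + 1)) :=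
          hT.measure_eq_add_children hmeas l m
      _ ≤ μ (cells (l + 1) (2 * m)) + c * μ (cells l m) := by gcongr
  · have h := hdecay l (2 * m)
    rw [show 2 * m / 2 = m by omega] at h
    rw [show (2 * m + 1) / 2 = m by omega]
    calc μ (cells l m) = μ (cells (l + 1) (2 * m)) + μ (cells (l + 1) (2 * m + 1)) :=
          hT.measure_eq_add_children hmeas l m
      _ ≤ c * μ (cells l m) + μ (cells (l + 1) (2 * m + 1)) := by gcongr
      _ = μ (cells (l + 1) (2 * m + 1)) + c * μ (cells l m) := add_comm _ _

theorem measure_parent_le_mul_child (hT : IsBinaryPartitionTree cells)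
    (hmeas : ∀ l j, MeasurableSet (cells l j)) (hfin : ∀ l j, μ (cells l j) ≠ ∞) {ρ : ℝ}
    (hρ0 : 0 ≤ ρ) (hρ1 : ρ < 1)
    (hdecay : ∀ l j, μ (cells (l + 1) j) ≤ ENNReal.ofReal ρ * μ (cells l (j / 2))) (l j : ℕ) :
    μ (cells l (j / 2)) ≤ ENNReal.ofReal (1 - ρ)⁻¹ * μ (cells (l + 1) j) := by
  have h : ENNReal.ofReal (1 - ρ) * μ (cells l (j / 2)) ≤ μ (cells (l + 1) j) := by
    rw [ENNReal.ofReal_sub 1 hρ0, ENNReal.ofReal_one, ENNReal.sub_mul fun _ _ => hfin _ _,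
      one_mul, tsub_le_iff_right]
    exact hT.measure_parent_le_add hmeas hdecay l j
  calc μ (cells l (j / 2))
      = ENNReal.ofReal (1 - ρ)⁻¹ * (ENNReal.ofReal (1 - ρ) * μ (cells l (j / 2))) := by
        rw [← mul_assoc, ← ENNReal.ofReal_mul (by linarith [inv_pos.2 (sub_pos.2 hρ1)]),
          inv_mul_cancel₀ (sub_pos.2 hρ1).ne', ENNReal.ofReal_one, one_mul]
    _ ≤ ENNReal.ofReal (1 - ρ)⁻¹ * μ (cells (l + 1) j) := by gcongr

theorem tsum_mul_measure_inter (hT : IsBinaryPartitionTree cells) {l m : ℕ}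
    (hlm : l ≤ m) (k : ℕ) (g : ℕ → ℝ≥0∞) :
    ∑' j, g j * μ (cells m k ∩ cells l j) = g (k / 2 ^ (m - l)) * μ (cells m k) := by
  have hsub : cells m k ⊆ cells l (k / 2 ^ (m - l)) := by
    simpa [Nat.add_sub_cancel' hlm] using hT.subset_ancestor (m - l) l k
  rw [tsum_eq_single (k / 2 ^ (m - l)), Set.inter_eq_left.2 hsub]
  intro j hj
  rw [((hT.disjoint_of_ne l hj).symm.mono_left hsub).inter_eq, measure_empty, mul_zero]

theorem tsum_rpow_neg_mul_measure_inter_le (hT : IsBinaryPartitionTree cells)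
    (hfin : ∀ l j, μ (cells l j) ≠ ∞) {ρ s : ℝ}
    (hρ0 : 0 < ρ) (hdecay : ∀ l j, μ (cells (l + 1) j) ≤ ENNReal.ofReal ρ * μ (cells l (j / 2)))
    (hs0 : 0 ≤ s) (hs1 : s < 1) (m k : ℕ) :
    ∑' (l : ℕ) (j : ℕ), μ (cells l j) ^ (-s) * (if l < m then μ (cells m k ∩ cells l j) else 0)
      ≤ ENNReal.ofReal (∑ l ∈ Finset.range m, (ρ ^ s) ^ (m - l)) * μ (cells m k) ^ (1 - s) := by
  have hlevel : ∀ l < m, μ (cells l (k / 2 ^ (m - l))) ^ (-s) * μ (cells m k)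
      ≤ ENNReal.ofReal ((ρ ^ s) ^ (m - l)) * μ (cells m k) ^ (1 - s) := by
    intro l hl
    have hdec := measure_le_pow_mul_ancestor hdecay (m - l) l k
    rw [Nat.add_sub_cancel' hl.le] at hdec
    have hc0 : ENNReal.ofReal ρ ^ (m - l) ≠ 0 := pow_ne_zero _ (ENNReal.ofReal_pos.2 hρ0).ne'
    calc μ (cells l (k / 2 ^ (m - l))) ^ (-s) * μ (cells m k)
        ≤ (ENNReal.ofReal ρ ^ (m - l)) ^ s * μ (cells m k) ^ (-s) * μ (cells m k) := by
          gcongr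
          exact ENNReal.rpow_neg_le_rpow_mul_rpow_neg hc0 (by simp) hs0 hdec
      _ = ENNReal.ofReal ((ρ ^ s) ^ (m - l)) * μ (cells m k) ^ (1 - s) := by
          rw [mul_assoc, ENNReal.rpow_neg_mul_self (hfin m k) hs1, ← ENNReal.ofReal_pow hρ0.le,
            ENNReal.ofReal_rpow_of_nonneg (by positivity) hs0, Real.rpow_pow_comm hρ0.le]
  calc ∑' (l : ℕ) (j : ℕ), μ (cells l j) ^ (-s) * (if l < m then μ (cells m k ∩ cells l j) else 0)
      = ∑' l, (Finset.range m : Set ℕ).indicator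
          (fun l => μ (cells l (k / 2 ^ (m - l))) ^ (-s) * μ (cells m k)) l := by
        refine tsum_congr fun l => ?_
        by_cases hl : l < m
        · simp only [hl, if_true, Finset.coe_range, Set.mem_Iio, Set.indicator_of_mem]
          exact hT.tsum_mul_measure_inter hl.le k _
        · simp [hl]
    _ = ∑ l ∈ Finset.range m, μ (cells l (k / 2 ^ (m - l))) ^ (-s) * μ (cells m k) :=
        (sum_eq_tsum_indicator _ _).symm
    _ ≤ ∑ l ∈ Finset.range m, ENNReal.ofReal ((ρ ^ s) ^ (m - l)) * μ (cells m k) ^ (1 - s) :=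
        Finset.sum_le_sum fun l hl => hlevel l (Finset.mem_range.1 hl)
    _ = _ := by
        rw [← Finset.sum_mul, ENNReal.ofReal_sum_of_nonneg fun _ _ => by positivity]

end IsBinaryPartitionTree

section Wavelet

variable {n d : ℕ} {cells : ℕ → ℕ → Set (Fin n → ℝ)} {f : (Fin n → ℝ) → EuclideanSpace ℝ (Fin d)}

noncomputable def treeWaveletCoeff (f : (Fin n → ℝ) → EuclideanSpace ℝ (Fin d))
    (cells : ℕ → ℕ → Set (Fin n → ℝ)) : ℕ → ℕ → EuclideanSpace ℝ (Fin d)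
  | 0, j => cellMean f (cells 0 j)
  | l + 1, j => cellMean f (cells (l + 1) j) - cellMean f (cells l (j / 2))

theorem treeWavelet_eq_indicator (m k : ℕ) :
    treeWavelet f cells m k = (cells m k).indicator fun _ => treeWaveletCoeff f cells m k := by
  cases m <;> rfl

theorem sum_treeWavelet_ancestors (hT : IsBinaryPartitionTree cells) {l j : ℕ}
    {x : Fin n → ℝ} (hx : x ∈ cells l j) :
    ∑ m ∈ Finset.range (l + 1), treeWavelet f cells m (j / 2 ^ (l - m)) x
      = cellMean f (cells l j) := by
  induction l generalizing j with
  | zero => simp [treeWavelet_eq_indicator, Set.indicator_of_mem hx, treeWaveletCoeff]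
  | succ l ih =>
    have hparent : ∑ m ∈ Finset.range (l + 1), treeWavelet f cells m (j / 2 ^ (l + 1 - m)) x
        = cellMean f (cells l (j / 2)) := by
      rw [← ih (hT.subset_parent l j hx)]
      refine Finset.sum_congr rfl fun m hm => ?_
      rw [Finset.mem_range] at hm
      rw [Nat.div_div_eq_div_mul, ← pow_succ', Nat.sub_add_comm (by omega)]
    rw [Finset.sum_range_succ, hparent, Nat.sub_self, pow_zero, Nat.div_one,
      treeWavelet_eq_indicator, Set.indicator_of_mem hx, treeWaveletCoeff, add_sub_cancel]

theorem hasSum_treeWavelet_le_level (hT : IsBinaryPartitionTree cells) {l j : ℕ}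
    {x : Fin n → ℝ} (hx : x ∈ cells l j) :
    HasSum (fun q : ℕ × ℕ => if q.1 ≤ l then treeWavelet f cells q.1 q.2 x else 0)
      (cellMean f (cells l j)) := by
  classical
  let ancestors := (Finset.range (l + 1)).image fun m => (m, j / 2 ^ (l - m))
  have hzero : ∀ q ∉ ancestors,
      (if q.1 ≤ l then treeWavelet f cells q.1 q.2 x else 0) = 0 := by
    rintro ⟨m, k⟩ hq
    split_ifs with hm
    · have hk : k ≠ j / 2 ^ (l - m) := by
        rintro rfl
        exact hq (Finset.mem_image.2 ⟨m, Finset.mem_range.2 (by omega), rfl⟩)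
      have hxm : x ∈ cells m (j / 2 ^ (l - m)) :=
        hT.subset_ancestor (l - m) m j (by rwa [Nat.add_sub_cancel' hm])
      rw [treeWavelet_eq_indicator, Set.indicator_of_notMem
        (Set.disjoint_right.1 (hT.disjoint_of_ne m hk) hxm)]
    · rfl
  convert hasSum_sum_of_ne_finset_zero (L := SummationFilter.unconditional _) hzero using 1
  rw [Finset.sum_image fun a _ b _ h => congrArg Prod.fst h, ← sum_treeWavelet_ancestors hT hx]
  exact Finset.sum_congr rfl fun m hm => (if_pos (Nat.lt_succ_iff.1 (Finset.mem_range.1 hm))).symm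

theorem hasSum_treeWavelet_gt_level (hT : IsBinaryPartitionTree cells)
    (hsum : ∀ x ∈ cells 0 0, HasSum (fun q : ℕ × ℕ => treeWavelet f cells q.1 q.2 x) (f x))
    {l j : ℕ} {x : Fin n → ℝ} (hx : x ∈ cells l j) :
    HasSum (fun q : ℕ × ℕ => if l < q.1 then treeWavelet f cells q.1 q.2 x else 0)
      (f x - cellMean f (cells l j)) := by
  convert (hsum x (hT.subset_root l j hx)).sub (hasSum_treeWavelet_le_level hT hx) using 1
  ext q
  by_cases h : q.1 ≤ l
  · simp [h, not_lt.2 h]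
  · simp [h, not_le.1 h]

end Wavelet

theorem enorm_sub_rpow_mul_measure_le {α E : Type*} [MeasurableSpace α] [NormedAddCommGroup E]
    {μ : Measure α} {s t : Set α} (hst : s ⊆ t) {f : α → E}
    (hf : AEStronglyMeasurable f (μ.restrict s)) (a b : E) {τ : ℝ} (hτ0 : 0 ≤ τ) (hτ1 : τ ≤ 1) :
    ‖a - b‖ₑ ^ τ * μ s ≤ ∫⁻ x in s, ‖f x - a‖ₑ ^ τ ∂μ + ∫⁻ x in t, ‖f x - b‖ₑ ^ τ ∂μ := by
  calc ‖a - b‖ₑ ^ τ * μ s = ∫⁻ _ in s, ‖a - b‖ₑ ^ τ ∂μ := (setLIntegral_const _ _).symm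
    _ ≤ ∫⁻ x in s, (‖f x - a‖ₑ ^ τ + ‖f x - b‖ₑ ^ τ) ∂μ := by
        refine lintegral_mono fun x => ?_
        have htri : ‖a - b‖ₑ ≤ ‖f x - a‖ₑ + ‖f x - b‖ₑ := by
          simpa only [edist_eq_enorm_sub] using edist_triangle_left a b (f x)
        exact (ENNReal.rpow_le_rpow htri hτ0).trans (ENNReal.rpow_add_le_add_rpow _ _ hτ0 hτ1)
    _ = ∫⁻ x in s, ‖f x - a‖ₑ ^ τ ∂μ + ∫⁻ x in s, ‖f x - b‖ₑ ^ τ ∂μ :=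
        lintegral_add_left' ((hf.sub aestronglyMeasurable_const).enorm.pow_const τ) _
    _ ≤ ∫⁻ x in s, ‖f x - a‖ₑ ^ τ ∂μ + ∫⁻ x in t, ‖f x - b‖ₑ ^ τ ∂μ := by
        gcongr

section Equivalence

variable {n d : ℕ} {cells : ℕ → ℕ → Set (Fin n → ℝ)} {f : (Fin n → ℝ) → EuclideanSpace ℝ (Fin d)}
  {τ : ℝ}

theorem enorm_sub_cellMean_rpow_le (hT : IsBinaryPartitionTree cells)
    (hsum : ∀ x ∈ cells 0 0, HasSum (fun q : ℕ × ℕ => treeWavelet f cells q.1 q.2 x) (f x))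
    (hτ0 : 0 < τ) (hτ1 : τ ≤ 1) {l j : ℕ} {x : Fin n → ℝ} (hx : x ∈ cells l j) :
    ‖f x - cellMean f (cells l j)‖ₑ ^ τ ≤ ∑' q : ℕ × ℕ, if l < q.1 then
      (cells q.1 q.2).indicator (fun _ => ‖treeWaveletCoeff f cells q.1 q.2‖ₑ ^ τ) x else 0 := by
  have htail := hasSum_treeWavelet_gt_level hT hsum hx
  calc ‖f x - cellMean f (cells l j)‖ₑ ^ τ
      ≤ (∑' q : ℕ × ℕ, ‖if l < q.1 then treeWavelet f cells q.1 q.2 x else 0‖ₑ) ^ τ := by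
        rw [← htail.tsum_eq]
        gcongr
        exact enorm_tsum_le_tsum_enorm
    _ ≤ ∑' q : ℕ × ℕ, ‖if l < q.1 then treeWavelet f cells q.1 q.2 x else 0‖ₑ ^ τ :=
        ENNReal.rpow_tsum_le_tsum_rpow hτ0 hτ1 _
    _ = _ := by
        refine tsum_congr fun q => ?_
        by_cases hq : x ∈ cells q.1 q.2 <;> split_ifs <;>
          simp [treeWavelet_eq_indicator, hq, ENNReal.zero_rpow_of_pos hτ0]

theorem lintegral_enorm_sub_cellMean_rpow_le (hT : IsBinaryPartitionTree cells)
    (hmeas : ∀ l j, MeasurableSet (cells l j))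
    (hsum : ∀ x ∈ cells 0 0, HasSum (fun q : ℕ × ℕ => treeWavelet f cells q.1 q.2 x) (f x))
    (hτ0 : 0 < τ) (hτ1 : τ ≤ 1) (l j : ℕ) :
    ∫⁻ x in cells l j, ‖f x - cellMean f (cells l j)‖ₑ ^ τ ≤ ∑' q : ℕ × ℕ,
      ‖treeWaveletCoeff f cells q.1 q.2‖ₑ ^ τ *
        (if l < q.1 then volume (cells q.1 q.2 ∩ cells l j) else 0) := by
  calc ∫⁻ x in cells l j, ‖f x - cellMean f (cells l j)‖ₑ ^ τ
      ≤ ∫⁻ x in cells l j, ∑' q : ℕ × ℕ, if l < q.1 then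
          (cells q.1 q.2).indicator (fun _ => ‖treeWaveletCoeff f cells q.1 q.2‖ₑ ^ τ) x
          else 0 :=
        setLIntegral_mono' (hmeas l j) fun x hx => enorm_sub_cellMean_rpow_le hT hsum hτ0 hτ1 hx
    _ = ∑' q : ℕ × ℕ, ∫⁻ x in cells l j, if l < q.1 then
          (cells q.1 q.2).indicator (fun _ => ‖treeWaveletCoeff f cells q.1 q.2‖ₑ ^ τ) x
          else 0 := by
        refine lintegral_tsum fun q => ?_
        split_ifs
        exacts [(measurable_const.indicator (hmeas _ _)).aemeasurable, aemeasurable_const]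
    _ = _ := by
        refine tsum_congr fun q => ?_
        split_ifs
        · rw [lintegral_indicator_const (hmeas _ _), Measure.restrict_apply (hmeas _ _)]
        · simp

theorem besovTildeTau_le_sparsityTau (hT : IsBinaryPartitionTree cells)
    (hmeas : ∀ l j, MeasurableSet (cells l j)) (hfin : volume (cells 0 0) ≠ ∞) {ρ α p : ℝ}
    (hρ0 : 0 < ρ) (hρ1 : ρ < 1)
    (hdecay : ∀ l j, volume (cells (l + 1) j) ≤ ENNReal.ofReal ρ * volume (cells l (j / 2)))
    (hsum : ∀ x ∈ cells 0 0, HasSum (fun q : ℕ × ℕ => treeWavelet f cells q.1 q.2 x) (f x))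
    (hτ0 : 0 < τ) (hτ1 : τ ≤ 1) (hs0 : 0 < α * τ) (hp : 0 < p) (hkey : τ / p = 1 - α * τ) :
    besovTildeTau α τ f cells ≤
      ENNReal.ofReal (ρ ^ (α * τ) / (1 - ρ ^ (α * τ))) * sparsityTau τ p f cells := by
  have hs1 : α * τ < 1 := by linarith [div_pos hτ0 hp]
  have hr0 : 0 ≤ ρ ^ (α * τ) := by positivity
  have hr1 : ρ ^ (α * τ) < 1 := Real.rpow_lt_one hρ0.le hρ1 hs0
  have hVfin l j : volume (cells l j) ≠ ∞ := measure_ne_top_of_subset (hT.subset_root l j) hfin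
  set a : ℕ → ℕ → ℝ≥0∞ := fun m k => ‖treeWaveletCoeff f cells m k‖ₑ ^ τ
  calc besovTildeTau α τ f cells
      = ∑' l : ℕ × ℕ, volume (cells l.1 l.2) ^ (-(α * τ)) *
          ∫⁻ x in cells l.1 l.2, ‖f x - cellMean f (cells l.1 l.2)‖ₑ ^ τ := by
        rw [besovTildeTau, ENNReal.tsum_prod']
        rfl
    _ ≤ ∑' l : ℕ × ℕ, volume (cells l.1 l.2) ^ (-(α * τ)) * ∑' q : ℕ × ℕ, a q.1 q.2 *
          (if l.1 < q.1 then volume (cells q.1 q.2 ∩ cells l.1 l.2) else 0) := by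
        gcongr with l
        exact lintegral_enorm_sub_cellMean_rpow_le hT hmeas hsum hτ0 hτ1 l.1 l.2
    _ = ∑' q : ℕ × ℕ, a q.1 q.2 * ∑' l : ℕ × ℕ, volume (cells l.1 l.2) ^ (-(α * τ)) *
          (if l.1 < q.1 then volume (cells q.1 q.2 ∩ cells l.1 l.2) else 0) :=
        ENNReal.tsum_mul_tsum_mul_comm _ _ _
    _ ≤ ∑' q : ℕ × ℕ, a q.1 q.2 * (ENNReal.ofReal (∑ l ∈ Finset.range q.1,
          (ρ ^ (α * τ)) ^ (q.1 - l)) * volume (cells q.1 q.2) ^ (1 - α * τ)) := by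
        gcongr with q
        rw [ENNReal.tsum_prod']
        exact hT.tsum_rpow_neg_mul_measure_inter_le hVfin hρ0 hdecay hs0.le hs1 q.1 q.2
    _ = ∑' (m : ℕ) (k : ℕ), a m k * (ENNReal.ofReal (∑ l ∈ Finset.range m,
          (ρ ^ (α * τ)) ^ (m - l)) * volume (cells m k) ^ (1 - α * τ)) := ENNReal.tsum_prod'
    _ ≤ ∑' (m : ℕ) (k : ℕ), a (m + 1) k * (ENNReal.ofReal (ρ ^ (α * τ) / (1 - ρ ^ (α * τ)))
          * volume (cells (m + 1) k) ^ (τ / p)) := by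
        rw [tsum_eq_zero_add' ENNReal.summable]
        simp only [Finset.range_zero, Finset.sum_empty, ENNReal.ofReal_zero, zero_mul, mul_zero,
          tsum_zero, zero_add, hkey]
        gcongr with m k
        exact sum_range_pow_sub_le hr0 hr1 _
    _ = _ := by
        simp only [sparsityTau, ← ENNReal.tsum_mul_left]
        exact tsum_congr fun m => tsum_congr fun k => mul_left_comm _ _ _

theorem sparsityTau_le_besovTildeTau (hT : IsBinaryPartitionTree cells)
    (hmeas : ∀ l j, MeasurableSet (cells l j)) (hfin : volume (cells 0 0) ≠ ∞) {ρ α p : ℝ}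
    (hρ0 : 0 ≤ ρ) (hρ1 : ρ < 1)
    (hdecay : ∀ l j, volume (cells (l + 1) j) ≤ ENNReal.ofReal ρ * volume (cells l (j / 2)))
    (hint : IntegrableOn f (cells 0 0)) (hτ0 : 0 < τ) (hτ1 : τ ≤ 1) (hs0 : 0 ≤ α * τ)
    (hp : 0 < p) (hkey : τ / p = 1 - α * τ) :
    sparsityTau τ p f cells ≤
      ENNReal.ofReal (1 + 2 * (1 - ρ)⁻¹ ^ (α * τ)) * besovTildeTau α τ f cells := by
  have hs1 : α * τ < 1 := by linarith [div_pos hτ0 hp]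
  have hVfin l j : volume (cells l j) ≠ ∞ := measure_ne_top_of_subset (hT.subset_root l j) hfin
  set c : ℝ≥0∞ := ENNReal.ofReal (1 - ρ)⁻¹ ^ (α * τ)
  set B : ℕ → ℕ → ℝ≥0∞ := fun l j => volume (cells l j) ^ (-(α * τ)) *
    ∫⁻ x in cells l j, ‖f x - cellMean f (cells l j)‖ₑ ^ τ
  have hnode l j : ‖cellMean f (cells (l + 1) j) - cellMean f (cells l (j / 2))‖ₑ ^ τ *
      volume (cells (l + 1) j) ^ (τ / p) ≤ B (l + 1) j + c * B l (j / 2) := by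
    have hvol : volume (cells (l + 1) j) ^ (-(α * τ)) ≤ c * volume (cells l (j / 2)) ^ (-(α * τ)) :=
      ENNReal.rpow_neg_le_rpow_mul_rpow_neg (by simp [sub_pos.2 hρ1]) (by simp) hs0
        (hT.measure_parent_le_mul_child hmeas hVfin hρ0 hρ1 hdecay l j)
    have hf : AEStronglyMeasurable f (volume.restrict (cells (l + 1) j)) :=
      hint.aestronglyMeasurable.mono_set (hT.subset_root _ _)
    calc ‖cellMean f (cells (l + 1) j) - cellMean f (cells l (j / 2))‖ₑ ^ τ *
          volume (cells (l + 1) j) ^ (τ / p)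
        = volume (cells (l + 1) j) ^ (-(α * τ)) *
            (‖cellMean f (cells (l + 1) j) - cellMean f (cells l (j / 2))‖ₑ ^ τ *
              volume (cells (l + 1) j)) := by
          rw [hkey, ← ENNReal.rpow_neg_mul_self (hVfin _ _) hs1]
          ring
      _ ≤ volume (cells (l + 1) j) ^ (-(α * τ)) *
            ((∫⁻ x in cells (l + 1) j, ‖f x - cellMean f (cells (l + 1) j)‖ₑ ^ τ) +
              ∫⁻ x in cells l (j / 2), ‖f x - cellMean f (cells l (j / 2))‖ₑ ^ τ) := by
          gcongr
          exact enorm_sub_rpow_mul_measure_le (hT.subset_parent l j) hf _ _ hτ0.le hτ1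
      _ ≤ B (l + 1) j + c * B l (j / 2) := by
          rw [mul_add, ← mul_assoc c]
          gcongr
  calc sparsityTau τ p f cells ≤ ∑' (l : ℕ) (j : ℕ), (B (l + 1) j + c * B l (j / 2)) :=
        ENNReal.tsum_le_tsum fun l => ENNReal.tsum_le_tsum fun j => hnode l j
    _ = ∑' (l : ℕ) (j : ℕ), B (l + 1) j + c * ∑' (l : ℕ) (j : ℕ), B l (j / 2) := by
        simp only [ENNReal.tsum_add, ENNReal.tsum_mul_left]
    _ ≤ ∑' (l : ℕ) (j : ℕ), B l j + c * (2 * ∑' (l : ℕ) (j : ℕ), B l j) := by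
        simp only [ENNReal.tsum_comp_div_two, ENNReal.tsum_mul_left]
        exact add_le_add_left
          (ENNReal.tsum_comp_le_tsum_of_injective Nat.succ_injective fun l => ∑' j, B l j) _
    _ = ENNReal.ofReal (1 + 2 * (1 - ρ)⁻¹ ^ (α * τ)) * besovTildeTau α τ f cells := by
        rw [ENNReal.ofReal_add zero_le_one (by positivity), ENNReal.ofReal_mul zero_le_two,
          ← ENNReal.ofReal_rpow_of_nonneg (by simp [sub_pos.2 hρ1 |>.le]) hs0]
        simp only [ENNReal.ofReal_one, ENNReal.ofReal_ofNat]
        change _ = _ * ∑' (l : ℕ) (j : ℕ), B l j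
        ring

end Equivalence

/-- Dimension-free equivalence `|f|_{B̃_τ^{α,1}(𝒯)} ∼ N_τ(f,𝒯)`: for a tree with geometric
decay parameter `0 < ρ < 1`, `0 < τ ≤ 1`, `1/τ = α + 1/p`, and `f = Σ_{Ω∈𝒯} ψ_Ω`, both
directions hold with constants depending only on `α, τ, ρ` and not on the dimension `n`. -/
theorem stmt_10 (ρ α p τ : ℝ) (hρ0 : 0 < ρ) (hρ1 : ρ < 1) (hα : 0 < α) (hp : 0 < p)
    (hτ0 : 0 < τ) (hτ1 : τ ≤ 1) (hτ : 1 / τ = α + 1 / p) :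
    ∃ C₁ C₂ : ℝ, 0 < C₁ ∧ 0 < C₂ ∧
      ∀ (n d : ℕ) (cells : ℕ → ℕ → Set (Fin n → ℝ))
        (f : (Fin n → ℝ) → EuclideanSpace ℝ (Fin d)),
        (∀ l j, MeasurableSet (cells l j)) →
        (∀ j, j ≠ 0 → cells 0 j = ∅) →
        (∀ l j, cells (l + 1) (2 * j) ∪ cells (l + 1) (2 * j + 1) = cells l j) →
        (∀ l j, Disjoint (cells (l + 1) (2 * j)) (cells (l + 1) (2 * j + 1))) →
        (∀ l j, volume (cells (l + 1) j) ≤ ENNReal.ofReal ρ * volume (cells l (j / 2))) →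
        volume (cells 0 0) < ⊤ →
        IntegrableOn f (cells 0 0) →
        (∀ x ∈ cells 0 0,
          HasSum (fun q : ℕ × ℕ => treeWavelet f cells q.1 q.2 x) (f x)) →
        besovTildeTau α τ f cells ^ (1 / τ)
            ≤ ENNReal.ofReal C₁ * sparsityTau τ p f cells ^ (1 / τ) ∧
          sparsityTau τ p f cells ^ (1 / τ)
            ≤ ENNReal.ofReal C₂ * besovTildeTau α τ f cells ^ (1 / τ) := by
  have hs0 : 0 < α * τ := mul_pos hα hτ0
  have hkey : τ / p = 1 - α * τ := by
    have h := congrArg (· * τ) hτ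
    simp only [one_div, inv_mul_cancel₀ hτ0.ne', add_mul] at h
    rw [div_eq_inv_mul]
    linarith
  have hr1 : ρ ^ (α * τ) < 1 := Real.rpow_lt_one hρ0.le hρ1 hs0
  have hK₁ : 0 < ρ ^ (α * τ) / (1 - ρ ^ (α * τ)) :=
    div_pos (Real.rpow_pos_of_pos hρ0 _) (sub_pos.2 hr1)
  have hK₂ : 0 < 1 + 2 * (1 - ρ)⁻¹ ^ (α * τ) := by
    have := Real.rpow_pos_of_pos (inv_pos.2 (sub_pos.2 hρ1)) (α * τ)
    positivity
  refine ⟨_, _, Real.rpow_pos_of_pos hK₁ (1 / τ), Real.rpow_pos_of_pos hK₂ (1 / τ), ?_⟩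
  intro n d cells f hmeas hroot hcup hdisj hdecay hfin hint hsum
  have hT : IsBinaryPartitionTree cells := ⟨hroot, hcup, hdisj⟩
  exact ⟨ENNReal.rpow_le_ofReal_rpow_mul_rpow hK₁.le (by positivity)
      (besovTildeTau_le_sparsityTau hT hmeas hfin.ne hρ0 hρ1 hdecay hsum hτ0 hτ1 hs0 hp hkey),
    ENNReal.rpow_le_ofReal_rpow_mul_rpow hK₂.le (by positivity)
      (sparsityTau_le_besovTildeTau hT hmeas hfin.ne hρ0.le hρ1 hdecay hint hτ0 hτ1 hs0.le hp hkey)⟩
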